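/- arXiv:1806.01003 — 6 statements merged into one kernel-verified Lean document; each statement's English description precedes it below -/
import Mathlib

section
/- For every agent i ∈ {1,…,N} and every state index ℓ ∈ {1,…,C}, the probability of the joint event {x(i) = ℓ and y'(e) = y(e) for every edge e ∈ E_S incident to i (i.e., e of the form (i,j) or (j,i))} equals v_i(ℓ) := p_ℓ · ∏_{h=1}^R ∏_{k=1}^R ( Σ_{m=1}^C p_{h|ℓ,m} · p_{k|m,ℓ} · p_m )^{n↔_i(h,k)} · ∏_{h=1}^R ( Σ_{m=1}^C p_{h|m,ℓ} · p_m )^{n←_i(h)} · ∏_{h=1}^R ( Σ_{m=1}^C p_{h|ℓ,m} · p_m )^{n→_i(h)}. -/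
open Finset

/-- The joint probability mass function `P(x,y)` of states `x` and edge scores `y`:
`P(x,y) = (∏ i p_{x(i)}) · (∏ (i,j)∈E_S  p_{y(i,j)|x(i),x(j)})`. -/
noncomputable def jointP {N C R : ℕ} (E : Finset (Fin N × Fin N))
    (p : Fin C → ℝ) (q : Fin R → Fin C → Fin C → ℝ)
    (ω : (Fin N → Fin C) × ({e // e ∈ E} → Fin R)) : ℝ :=
  (∏ i, p (ω.1 i)) * ∏ e : {e // e ∈ E}, q (ω.2 e) (ω.1 e.1.1) (ω.1 e.1.2)

/-- The probability of an event `A`: the sum of `P(x,y)` over the outcomes in `A`. -/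
noncomputable def prEvent {N C R : ℕ} (E : Finset (Fin N × Fin N))
    (p : Fin C → ℝ) (q : Fin R → Fin C → Fin C → ℝ)
    (A : Set ((Fin N → Fin C) × ({e // e ∈ E} → Fin R))) : ℝ :=
  ∑ ω : (Fin N → Fin C) × ({e // e ∈ E} → Fin R), A.indicator (jointP E p q) ω

private lemma sum_fn_prod {ι κ : Type*} [Fintype ι] [Fintype κ] [DecidableEq ι]
    (g : ι → κ → ℝ) :
    ∑ σ : ι → κ, ∏ j, g j (σ j) = ∏ j, ∑ r, g j r := by
  rw [Finset.prod_univ_sum, Fintype.piFinset_univ]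

private lemma edge_prod_fst {N : ℕ} (E : Finset (Fin N × Fin N)) (i : Fin N)
    (f : Fin N × Fin N → ℝ) :
    (∏ e ∈ E, if e.1 = i then f e else 1)
      = ∏ j : Fin N, if (i, j) ∈ E then f (i, j) else 1 := by
  classical
  rw [← Finset.prod_filter, ← Finset.prod_filter]
  refine Finset.prod_nbij' (fun e => e.2) (fun j => (i, j)) ?_ ?_ ?_ ?_ ?_
  · intro e he
    simp only [Finset.mem_filter] at he ⊢
    obtain ⟨he1, he2⟩ := he
    exact ⟨mem_univ _, by rw [show ((i : Fin N), e.2) = e by rw [← he2]]; exact he1⟩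
  · intro j hj
    simp only [Finset.mem_filter] at hj ⊢
    exact ⟨hj.2, trivial⟩
  · intro e he
    simp only [Finset.mem_filter] at he
    rw [← he.2]
  · intro j hj; rfl
  · intro e he
    simp only [Finset.mem_filter] at he
    rw [← he.2]

private lemma edge_prod_snd {N : ℕ} (E : Finset (Fin N × Fin N)) (i : Fin N)
    (f : Fin N × Fin N → ℝ) :
    (∏ e ∈ E, if e.2 = i then f e else 1)
      = ∏ j : Fin N, if (j, i) ∈ E then f (j, i) else 1 := by
  classical
  rw [← Finset.prod_filter, ← Finset.prod_filter]
  refine Finset.prod_nbij' (fun e => e.1) (fun j => (j, i)) ?_ ?_ ?_ ?_ ?_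
  · intro e he
    simp only [Finset.mem_filter] at he ⊢
    obtain ⟨he1, he2⟩ := he
    exact ⟨mem_univ _, by rw [show ((e.1 : Fin N), i) = e by rw [← he2]]; exact he1⟩
  · intro j hj
    simp only [Finset.mem_filter] at hj ⊢
    exact ⟨hj.2, trivial⟩
  · intro e he
    simp only [Finset.mem_filter] at he
    rw [← he.2]
  · intro j hj; rfl
  · intro e he
    simp only [Finset.mem_filter] at he
    rw [← he.2]

/-- regroup a product over a set by the fibers of a map into a fintype -/
private lemma prod_comp_pow {γ : Type*} [Fintype γ] [DecidableEq γ] {N : ℕ}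
    (s : Finset (Fin N)) (g : Fin N → γ) (v : γ → ℝ) :
    ∏ j ∈ s, v (g j) = ∏ c : γ, v c ^ (s.filter (fun j => g j = c)).card := by
  classical
  rw [← Finset.prod_fiberwise_of_maps_to (t := univ) (fun x _ => mem_univ (g x)) (fun j => v (g j))]
  refine Finset.prod_congr rfl fun c _ => ?_
  rw [← Finset.prod_const]
  refine Finset.prod_congr rfl fun j hj => ?_
  rw [(Finset.mem_filter.mp hj).2]

theorem stmt_0 (N C R : ℕ) (hN : 1 ≤ N) (hC : 1 ≤ C) (hR : 1 ≤ R)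
    (E : Finset (Fin N × Fin N)) (hE : ∀ i : Fin N, (i, i) ∉ E)
    (p : Fin C → ℝ) (hp : ∀ ℓ, 0 ≤ p ℓ) (hpsum : ∑ ℓ, p ℓ = 1)
    (q : Fin R → Fin C → Fin C → ℝ) (hq : ∀ h ℓ m, 0 ≤ q h ℓ m)
    (hqsum : ∀ ℓ m, ∑ h, q h ℓ m = 1)
    (y : Fin N × Fin N → Fin R) (i : Fin N) (ℓ : Fin C) :
    prEvent E p q
      {ω | ω.1 i = ℓ ∧
        ∀ e : {e // e ∈ E}, (e.1.1 = i ∨ e.1.2 = i) → ω.2 e = y e.1}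
    = p ℓ
      * (∏ h : Fin R, ∏ k : Fin R,
          (∑ m, q h ℓ m * q k m ℓ * p m)
            ^ ((univ.filter (fun j : Fin N =>
                ((i, j) ∈ E ∧ (j, i) ∈ E) ∧ y (i, j) = h ∧ y (j, i) = k)).card))
      * (∏ h : Fin R,
          (∑ m, q h m ℓ * p m)
            ^ ((univ.filter (fun j : Fin N =>
                ((j, i) ∈ E ∧ (i, j) ∉ E) ∧ y (j, i) = h)).card))
      * (∏ h : Fin R,
          (∑ m, q h ℓ m * p m)
            ^ ((univ.filter (fun j : Fin N =>
                ((i, j) ∈ E ∧ (j, i) ∉ E) ∧ y (i, j) = h)).card)) := by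
  classical
  -- the per-agent factor functions
  set G : Fin N → Fin C → ℝ := fun j m =>
    if j = i then (if m = ℓ then p ℓ else 0)
    else p m * (if (i, j) ∈ E then q (y (i, j)) ℓ m else 1)
      * (if (j, i) ∈ E then q (y (j, i)) m ℓ else 1) with hG
  set w : Fin N → ℝ := fun j =>
    ∑ m, p m * (if (i, j) ∈ E then q (y (i, j)) ℓ m else 1)
      * (if (j, i) ∈ E then q (y (j, i)) m ℓ else 1) with hw
  -- Step 1: reduce the probability to a product form.
  have key : prEvent E p q
      {ω | ω.1 i = ℓ ∧
        ∀ e : {e // e ∈ E}, (e.1.1 = i ∨ e.1.2 = i) → ω.2 e = y e.1}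
      = ∑ x : Fin N → Fin C, ∏ j, G j (x j) := by
    unfold prEvent
    rw [Fintype.sum_prod_type]
    refine Finset.sum_congr rfl fun x _ => ?_
    -- sum over the score assignments
    have hσ : ∀ σ : {e // e ∈ E} → Fin R,
        ({ω : (Fin N → Fin C) × ({e // e ∈ E} → Fin R) | ω.1 i = ℓ ∧
          ∀ e : {e // e ∈ E}, (e.1.1 = i ∨ e.1.2 = i) → ω.2 e = y e.1}).indicator
            (jointP E p q) (x, σ)
        = (if x i = ℓ then 1 else 0) * (∏ j, p (x j))
            * ∏ e : {e // e ∈ E},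
              (if (e.1.1 = i ∨ e.1.2 = i) → σ e = y e.1
                then q (σ e) (x e.1.1) (x e.1.2) else 0) := by
      intro σ
      rw [Set.indicator_apply]
      simp only [Set.mem_setOf_eq, jointP]
      rw [Finset.prod_ite_zero]
      by_cases hx : x i = ℓ
      · by_cases hc : ∀ e : {e // e ∈ E}, (e.1.1 = i ∨ e.1.2 = i) → σ e = y e.1
        · simp [hx, hc]
        · simp only [hx, hc, true_and, and_false, if_false, if_true, one_mul]
          rw [if_neg (by simpa using hc), mul_zero]
      · simp [hx]
    rw [Finset.sum_congr rfl fun σ _ => hσ σ]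
    rw [← Finset.mul_sum]
    rw [sum_fn_prod (fun (e : {e // e ∈ E}) (r : Fin R) =>
      if (e.1.1 = i ∨ e.1.2 = i) → r = y e.1 then q r (x e.1.1) (x e.1.2) else 0)]
    have hedge : ∀ e : {e // e ∈ E},
        (∑ r, if (e.1.1 = i ∨ e.1.2 = i) → r = y e.1
            then q r (x e.1.1) (x e.1.2) else 0)
        = (if e.1.1 = i ∨ e.1.2 = i then q (y e.1) (x e.1.1) (x e.1.2) else 1) := by
      intro e
      by_cases hi : e.1.1 = i ∨ e.1.2 = i
      · simp [hi, Finset.sum_ite_eq']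
      · simp [hi, hqsum]
    rw [Finset.prod_congr rfl fun e _ => hedge e]
    -- now the pointwise identity
    by_cases hx : x i = ℓ
    · rw [if_pos hx, one_mul]
      have hGx : ∀ j : Fin N, G j (x j)
          = p (x j) * (if (i, j) ∈ E then q (y (i, j)) ℓ (x j) else 1)
              * (if (j, i) ∈ E then q (y (j, i)) (x j) ℓ else 1) := by
        intro j
        by_cases hj : j = i
        · subst hj
          simp [hG, hx, hE j]
        · simp [hG, hj]
      rw [Finset.prod_congr rfl fun j _ => hGx j]
      rw [Finset.prod_mul_distrib, Finset.prod_mul_distrib, mul_assoc]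
      congr 1
      -- edge product identity
      have hsplit : ∀ e : Fin N × Fin N, e ∈ E →
          (if e.1 = i ∨ e.2 = i then q (y e) (x e.1) (x e.2) else 1)
          = (if e.1 = i then q (y e) ℓ (x e.2) else 1)
              * (if e.2 = i then q (y e) (x e.1) ℓ else 1) := by
        intro e he
        by_cases h1 : e.1 = i
        · have h2 : ¬ e.2 = i := by
            intro h2
            exact hE i (by rwa [show ((i : Fin N), i) = e from Prod.ext h1.symm h2.symm])
          simp [h1, h2, ← hx]
        · by_cases h2 : e.2 = i
          · simp [h1, h2, ← hx]
          · simp [h1, h2]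
      calc (∏ e : {e // e ∈ E},
              if e.1.1 = i ∨ e.1.2 = i then q (y e.1) (x e.1.1) (x e.1.2) else 1)
          = ∏ e ∈ E, (if e.1 = i ∨ e.2 = i then q (y e) (x e.1) (x e.2) else 1) := by
            exact Finset.prod_coe_sort E
              (fun e => if e.1 = i ∨ e.2 = i then q (y e) (x e.1) (x e.2) else 1)
        _ = ∏ e ∈ E, ((if e.1 = i then q (y e) ℓ (x e.2) else 1)
              * (if e.2 = i then q (y e) (x e.1) ℓ else 1)) :=
            Finset.prod_congr rfl hsplit
        _ = (∏ e ∈ E, (if e.1 = i then q (y e) ℓ (x e.2) else 1))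
              * ∏ e ∈ E, (if e.2 = i then q (y e) (x e.1) ℓ else 1) :=
            Finset.prod_mul_distrib
        _ = (∏ j : Fin N, if (i, j) ∈ E then q (y (i, j)) ℓ (x j) else 1)
              * ∏ j : Fin N, if (j, i) ∈ E then q (y (j, i)) (x j) ℓ else 1 := by
            rw [edge_prod_fst E i (fun e => q (y e) ℓ (x e.2)),
              edge_prod_snd E i (fun e => q (y e) (x e.1) ℓ)]
    · rw [if_neg hx, zero_mul, zero_mul]
      refine (Finset.prod_eq_zero (Finset.mem_univ i) ?_).symm
      simp [hG, hx]
  rw [key, sum_fn_prod]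
  -- Step 2: evaluate the product of sums
  have hstep2 : (∏ j, ∑ m, G j m) = p ℓ * ∏ j, w j := by
    rw [← Finset.mul_prod_erase univ (fun j => ∑ m, G j m) (mem_univ i),
      ← Finset.mul_prod_erase univ w (mem_univ i)]
    have h1 : (∑ m, G i m) = p ℓ := by
      simp [hG, Finset.sum_ite_eq']
    have h2 : w i = 1 := by
      simp [hw, hE i, hpsum]
    rw [h1, h2, one_mul]
    congr 1
    refine Finset.prod_congr rfl fun j hj => ?_
    simp [hG, hw, (Finset.mem_erase.mp hj).1]
  rw [hstep2]
  -- Step 3: regroup the product over agents by class and score fibers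
  have hsplit1 := Finset.prod_filter_mul_prod_filter_not univ
    (fun j : Fin N => (i, j) ∈ E) w
  have hsplit2 := Finset.prod_filter_mul_prod_filter_not
    (univ.filter (fun j : Fin N => (i, j) ∈ E)) (fun j : Fin N => (j, i) ∈ E) w
  have hsplit3 := Finset.prod_filter_mul_prod_filter_not
    (univ.filter (fun j : Fin N => ¬ (i, j) ∈ E)) (fun j : Fin N => (j, i) ∈ E) w
  rw [← hsplit1, ← hsplit2, ← hsplit3]
  simp only [Finset.filter_filter]
  -- the class with no edges contributes 1
  have hnone : (∏ j ∈ univ.filter (fun j : Fin N => ¬ (i, j) ∈ E ∧ ¬ (j, i) ∈ E), w j) = 1 := by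
    refine Finset.prod_eq_one fun j hj => ?_
    have h := (Finset.mem_filter.mp hj).2
    simp [hw, h.1, h.2, hpsum]
  rw [hnone, mul_one]
  -- both directions
  have hboth : (∏ j ∈ univ.filter (fun j : Fin N => (i, j) ∈ E ∧ (j, i) ∈ E), w j)
      = ∏ h : Fin R, ∏ k : Fin R,
          (∑ m, q h ℓ m * q k m ℓ * p m)
            ^ ((univ.filter (fun j : Fin N =>
                ((i, j) ∈ E ∧ (j, i) ∈ E) ∧ y (i, j) = h ∧ y (j, i) = k)).card) := by
    have h1 : (∏ j ∈ univ.filter (fun j : Fin N => (i, j) ∈ E ∧ (j, i) ∈ E), w j)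
        = ∏ j ∈ univ.filter (fun j : Fin N => (i, j) ∈ E ∧ (j, i) ∈ E),
            (fun c : Fin R × Fin R => ∑ m, q c.1 ℓ m * q c.2 m ℓ * p m)
              ((y (i, j), y (j, i))) := by
      refine Finset.prod_congr rfl fun j hj => ?_
      have h := (Finset.mem_filter.mp hj).2
      simp only [hw, h.1, h.2, if_true]
      refine Finset.sum_congr rfl fun m _ => by ring
    rw [h1, prod_comp_pow _ (fun j => (y (i, j), y (j, i)))
      (fun c : Fin R × Fin R => ∑ m, q c.1 ℓ m * q c.2 m ℓ * p m)]
    rw [Fintype.prod_prod_type]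
    refine Finset.prod_congr rfl fun h _ => Finset.prod_congr rfl fun k _ => ?_
    congr 1
    simp only [Finset.filter_filter]
    refine congrArg Finset.card (Finset.filter_congr fun j _ => ?_)
    simp [Prod.ext_iff]
  -- incoming only
  have hin : (∏ j ∈ univ.filter (fun j : Fin N => ¬ (i, j) ∈ E ∧ (j, i) ∈ E), w j)
      = ∏ h : Fin R,
          (∑ m, q h m ℓ * p m)
            ^ ((univ.filter (fun j : Fin N =>
                ((j, i) ∈ E ∧ (i, j) ∉ E) ∧ y (j, i) = h)).card) := by
    have h1 : (∏ j ∈ univ.filter (fun j : Fin N => ¬ (i, j) ∈ E ∧ (j, i) ∈ E), w j)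
        = ∏ j ∈ univ.filter (fun j : Fin N => ¬ (i, j) ∈ E ∧ (j, i) ∈ E),
            (fun c : Fin R => ∑ m, q c m ℓ * p m) (y (j, i)) := by
      refine Finset.prod_congr rfl fun j hj => ?_
      have h := (Finset.mem_filter.mp hj).2
      simp only [hw, h.1, h.2, if_true, if_false, mul_one]
      refine Finset.sum_congr rfl fun m _ => by ring
    rw [h1, prod_comp_pow _ (fun j => y (j, i)) (fun c : Fin R => ∑ m, q c m ℓ * p m)]
    refine Finset.prod_congr rfl fun h _ => ?_
    congr 1
    simp only [Finset.filter_filter]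
    refine congrArg Finset.card (Finset.filter_congr fun j _ => ?_)
    constructor
    · rintro ⟨⟨h1, h2⟩, h3⟩; exact ⟨⟨h2, h1⟩, h3⟩
    · rintro ⟨⟨h1, h2⟩, h3⟩; exact ⟨⟨h2, h1⟩, h3⟩
  -- outgoing only
  have hout : (∏ j ∈ univ.filter (fun j : Fin N => (i, j) ∈ E ∧ ¬ (j, i) ∈ E), w j)
      = ∏ h : Fin R,
          (∑ m, q h ℓ m * p m)
            ^ ((univ.filter (fun j : Fin N =>
                ((i, j) ∈ E ∧ (j, i) ∉ E) ∧ y (i, j) = h)).card) := by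
    have h1 : (∏ j ∈ univ.filter (fun j : Fin N => (i, j) ∈ E ∧ ¬ (j, i) ∈ E), w j)
        = ∏ j ∈ univ.filter (fun j : Fin N => (i, j) ∈ E ∧ ¬ (j, i) ∈ E),
            (fun c : Fin R => ∑ m, q c ℓ m * p m) (y (i, j)) := by
      refine Finset.prod_congr rfl fun j hj => ?_
      have h := (Finset.mem_filter.mp hj).2
      simp only [hw, h.1, h.2, if_true, if_false, mul_one]
      refine Finset.sum_congr rfl fun m _ => by ring
    rw [h1, prod_comp_pow _ (fun j => y (i, j)) (fun c : Fin R => ∑ m, q c ℓ m * p m)]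
    refine Finset.prod_congr rfl fun h _ => ?_
    congr 1
    simp only [Finset.filter_filter]
  rw [hboth, hin, hout]
  ring
end

section
/- (Theorem 1.) For every agent i ∈ {1,…,N}, if Z_i := Σ_{ℓ=1}^C v_i(ℓ) > 0, then for every state index ℓ ∈ {1,…,C} the conditional probability of the event {x(i) = ℓ} given the event {y'(e) = y(e) for every edge e ∈ E_S incident to i} equals v_i(ℓ)/Z_i, where v_i(ℓ) := p_ℓ · ∏_{h=1}^R ∏_{k=1}^R ( Σ_{m=1}^C p_{h|ℓ,m} · p_{k|m,ℓ} · p_m )^{n↔_i(h,k)} · ∏_{h=1}^R ( Σ_{m=1}^C p_{h|m,ℓ} · p_m )^{n←_i(h)} · ∏_{h=1}^R ( Σ_{m=1}^C p_{h|ℓ,m} · p_m )^{n→_i(h)}. -/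
open Finset

/-- The quantity `v_i(ℓ)` of Theorem 1. -/
noncomputable def vval {N C R : ℕ} (E : Finset (Fin N × Fin N))
    (p : Fin C → ℝ) (q : Fin R → Fin C → Fin C → ℝ)
    (y : Fin N × Fin N → Fin R) (i : Fin N) (ℓ : Fin C) : ℝ :=
  p ℓ
    * (∏ h : Fin R, ∏ k : Fin R,
        (∑ m, q h ℓ m * q k m ℓ * p m)
          ^ ((univ.filter (fun j : Fin N =>
              ((i, j) ∈ E ∧ (j, i) ∈ E) ∧ y (i, j) = h ∧ y (j, i) = k)).card))
    * (∏ h : Fin R,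
        (∑ m, q h m ℓ * p m)
          ^ ((univ.filter (fun j : Fin N =>
              ((j, i) ∈ E ∧ (i, j) ∉ E) ∧ y (j, i) = h)).card))
    * (∏ h : Fin R,
        (∑ m, q h ℓ m * p m)
          ^ ((univ.filter (fun j : Fin N =>
              ((i, j) ∈ E ∧ (j, i) ∉ E) ∧ y (i, j) = h)).card))



section
variable {N C R : ℕ} (E : Finset (Fin N × Fin N))
    (p : Fin C → ℝ) (q : Fin R → Fin C → Fin C → ℝ)
    (y : Fin N × Fin N → Fin R) (i : Fin N) (ℓ : Fin C)

/-- per-neighbor factor -/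
noncomputable def thm1Fj (j : Fin N) (m : Fin C) : ℝ :=
  (if (i, j) ∈ E then q (y (i, j)) ℓ m else 1) * (if (j, i) ∈ E then q (y (j, i)) m ℓ else 1)

lemma thm1_fiber_prod {α β : Type*} [Fintype β] [DecidableEq β] (s : Finset α) (g : α → β) (c : β → ℝ) :
    ∏ j ∈ s, c (g j) = ∏ b : β, c b ^ (s.filter (fun j => g j = b)).card := by
  rw [← Finset.prod_fiberwise_of_maps_to (fun j _ => Finset.mem_univ (g j)) (fun j => c (g j))]
  refine Finset.prod_congr rfl fun b _ => ?_
  rw [Finset.prod_congr rfl (fun j hj => by rw [(Finset.mem_filter.1 hj).2]), Finset.prod_const]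

lemma thm1_inner_sum (hqsum : ∀ ℓ m, ∑ h, q h ℓ m = 1) (x : Fin N → Fin C) :
    ∑ s : {e // e ∈ E} → Fin R,
      (if (∀ e : {e // e ∈ E}, (e.1.1 = i ∨ e.1.2 = i) → s e = y e.1)
        then ∏ e : {e // e ∈ E}, q (s e) (x e.1.1) (x e.1.2) else 0)
    = ∏ e : {e // e ∈ E}, (if (e.1.1 = i ∨ e.1.2 = i) then q (y e.1) (x e.1.1) (x e.1.2) else 1) := by
  classical
  have hpt : ∀ s : {e // e ∈ E} → Fin R,
      (if (∀ e : {e // e ∈ E}, (e.1.1 = i ∨ e.1.2 = i) → s e = y e.1)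
        then ∏ e : {e // e ∈ E}, q (s e) (x e.1.1) (x e.1.2) else 0)
      = ∏ e : {e // e ∈ E}, (if (e.1.1 = i ∨ e.1.2 = i)
          then (if s e = y e.1 then q (s e) (x e.1.1) (x e.1.2) else 0)
          else q (s e) (x e.1.1) (x e.1.2)) := by
    intro s
    by_cases hs : ∀ e : {e // e ∈ E}, (e.1.1 = i ∨ e.1.2 = i) → s e = y e.1
    · rw [if_pos hs]
      refine Finset.prod_congr rfl fun e _ => ?_
      by_cases he : e.1.1 = i ∨ e.1.2 = i
      · rw [if_pos he, if_pos (hs e he)]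
      · rw [if_neg he]
    · rw [if_neg hs]
      push_neg at hs
      obtain ⟨e, he, hne⟩ := hs
      exact (Finset.prod_eq_zero (Finset.mem_univ e) (by simp [he, hne])).symm
  rw [Finset.sum_congr rfl fun s _ => hpt s]
  rw [← Fintype.piFinset_univ, ← Finset.prod_univ_sum (fun _ : {e // e ∈ E} => (univ : Finset (Fin R)))
    (fun e h => if (e.1.1 = i ∨ e.1.2 = i)
      then (if h = y e.1 then q h (x e.1.1) (x e.1.2) else 0)
      else q h (x e.1.1) (x e.1.2))]
  refine Finset.prod_congr rfl fun e _ => ?_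
  by_cases he : e.1.1 = i ∨ e.1.2 = i
  · simp only [if_pos he]
    rw [Finset.sum_ite_eq' univ (y e.1) (fun h => q h (x e.1.1) (x e.1.2))]
    simp
  · simp only [if_neg he]
    exact hqsum _ _

end

section
variable {N C R : ℕ} (E : Finset (Fin N × Fin N))
    (q : Fin R → Fin C → Fin C → ℝ)
    (y : Fin N × Fin N → Fin R) (i : Fin N) (ℓ : Fin C)

lemma thm1_edge_prod (hE : ∀ j : Fin N, (j, j) ∉ E) (x : Fin N → Fin C) (hx : x i = ℓ) :
    ∏ e ∈ E.filter (fun e => e.1 = i ∨ e.2 = i), q (y e) (x e.1) (x e.2)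
    = ∏ j ∈ univ.erase i,
        ((if (i, j) ∈ E then q (y (i, j)) ℓ (x j) else 1) *
         (if (j, i) ∈ E then q (y (j, i)) (x j) ℓ else 1)) := by
  classical
  have hdisj : Disjoint (E.filter (fun e => e.1 = i)) (E.filter (fun e => e.2 = i)) := by
    rw [Finset.disjoint_left]
    rintro ⟨a, b⟩ h1 h2
    rw [Finset.mem_filter] at h1 h2
    have ha : a = i := h1.2
    have hb : b = i := h2.2
    have hab := h1.1
    rw [ha, hb] at hab
    exact hE i hab
  rw [Finset.filter_or, Finset.prod_union hdisj]
  have h1 : ∏ e ∈ E.filter (fun e => e.1 = i), q (y e) (x e.1) (x e.2)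
      = ∏ j ∈ (univ.erase i).filter (fun j => (i, j) ∈ E), q (y (i, j)) ℓ (x j) := by
    refine Finset.prod_nbij' (fun e => e.2) (fun j => (i, j)) ?_ ?_ ?_ ?_ ?_
    · rintro ⟨a, b⟩ h
      rw [Finset.mem_filter] at h
      have ha : a = i := h.2
      have hab := h.1
      rw [Finset.mem_filter, Finset.mem_erase]
      refine ⟨⟨?_, Finset.mem_univ b⟩, ha ▸ hab⟩
      intro hbi
      have hbi' : b = i := hbi
      rw [ha, hbi'] at hab
      exact hE i hab
    · intro j hj
      rw [Finset.mem_filter, Finset.mem_erase] at hj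
      rw [Finset.mem_filter]
      exact ⟨hj.2, rfl⟩
    · rintro ⟨a, b⟩ h
      rw [Finset.mem_filter] at h
      have ha : a = i := h.2
      rw [ha]
    · intro j _
      rfl
    · rintro ⟨a, b⟩ h
      rw [Finset.mem_filter] at h
      have ha : a = i := h.2
      rw [ha, hx]
  have h2 : ∏ e ∈ E.filter (fun e => e.2 = i), q (y e) (x e.1) (x e.2)
      = ∏ j ∈ (univ.erase i).filter (fun j => (j, i) ∈ E), q (y (j, i)) (x j) ℓ := by
    refine Finset.prod_nbij' (fun e => e.1) (fun j => (j, i)) ?_ ?_ ?_ ?_ ?_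
    · rintro ⟨a, b⟩ h
      rw [Finset.mem_filter] at h
      have hb : b = i := h.2
      have hab := h.1
      rw [Finset.mem_filter, Finset.mem_erase]
      refine ⟨⟨?_, Finset.mem_univ a⟩, hb ▸ hab⟩
      intro hai
      have hai' : a = i := hai
      rw [hb, hai'] at hab
      exact hE i hab
    · intro j hj
      rw [Finset.mem_filter, Finset.mem_erase] at hj
      rw [Finset.mem_filter]
      exact ⟨hj.2, rfl⟩
    · rintro ⟨a, b⟩ h
      rw [Finset.mem_filter] at h
      have hb : b = i := h.2
      rw [hb]
    · intro j _
      rfl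
    · rintro ⟨a, b⟩ h
      rw [Finset.mem_filter] at h
      have hb : b = i := h.2
      rw [hb, hx]
  rw [h1, h2, Finset.prod_filter, Finset.prod_filter, ← Finset.prod_mul_distrib]
end

section
variable {N C R : ℕ} (E : Finset (Fin N × Fin N))
    (p : Fin C → ℝ) (q : Fin R → Fin C → Fin C → ℝ)
    (y : Fin N × Fin N → Fin R) (i : Fin N) (ℓ : Fin C)

lemma thm1_state_sum (G : Fin N → Fin C → ℝ) :
    ∑ x : Fin N → Fin C,
      (if x i = ℓ then (∏ j, p (x j)) * ∏ j ∈ univ.erase i, G j (x j) else 0)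
    = p ℓ * ∏ j ∈ univ.erase i, ∑ m, p m * G j m := by
  classical
  have hpt : ∀ x : Fin N → Fin C,
      (if x i = ℓ then (∏ j, p (x j)) * ∏ j ∈ univ.erase i, G j (x j) else 0)
      = ∏ j, (if j = i then (if x j = ℓ then p ℓ else 0) else p (x j) * G j (x j)) := by
    intro x
    by_cases hx : x i = ℓ
    · rw [if_pos hx]
      rw [← Finset.mul_prod_erase univ (fun j => p (x j)) (Finset.mem_univ i),
          ← Finset.mul_prod_erase univ
            (fun j => if j = i then (if x j = ℓ then p ℓ else 0) else p (x j) * G j (x j))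
            (Finset.mem_univ i)]
      rw [if_pos rfl, if_pos hx, hx, mul_assoc, ← Finset.prod_mul_distrib]
      congr 1
      refine Finset.prod_congr rfl fun j hj => ?_
      rw [if_neg (Finset.mem_erase.1 hj).1]
    · rw [if_neg hx]
      refine (Finset.prod_eq_zero (Finset.mem_univ i) ?_).symm
      rw [if_pos rfl, if_neg hx]
  rw [Finset.sum_congr rfl fun x _ => hpt x]
  rw [← Fintype.piFinset_univ, ← Finset.prod_univ_sum (fun _ : Fin N => (univ : Finset (Fin C)))
    (fun j m => if j = i then (if m = ℓ then p ℓ else 0) else p m * G j m)]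
  rw [← Finset.mul_prod_erase univ
    (fun j => ∑ m, if j = i then (if m = ℓ then p ℓ else 0) else p m * G j m)
    (Finset.mem_univ i)]
  congr 1
  · simp
  · refine Finset.prod_congr rfl fun j hj => ?_
    refine Finset.sum_congr rfl fun m _ => ?_
    rw [if_neg (Finset.mem_erase.1 hj).1]
end


section
variable {N C R : ℕ} (E : Finset (Fin N × Fin N))
    (p : Fin C → ℝ) (q : Fin R → Fin C → Fin C → ℝ)
    (y : Fin N × Fin N → Fin R) (i : Fin N) (ℓ : Fin C)

lemma thm1_comb (hE : ∀ j : Fin N, (j, j) ∉ E) (hpsum : ∑ m, p m = 1) :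
    ∏ j ∈ univ.erase i,
      (∑ m, p m * ((if (i, j) ∈ E then q (y (i, j)) ℓ m else 1) *
                   (if (j, i) ∈ E then q (y (j, i)) m ℓ else 1)))
    = (∏ h : Fin R, ∏ k : Fin R,
        (∑ m, q h ℓ m * q k m ℓ * p m)
          ^ ((univ.filter (fun j : Fin N =>
              ((i, j) ∈ E ∧ (j, i) ∈ E) ∧ y (i, j) = h ∧ y (j, i) = k)).card))
    * (∏ h : Fin R,
        (∑ m, q h m ℓ * p m)
          ^ ((univ.filter (fun j : Fin N =>
              ((j, i) ∈ E ∧ (i, j) ∉ E) ∧ y (j, i) = h)).card))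
    * (∏ h : Fin R,
        (∑ m, q h ℓ m * p m)
          ^ ((univ.filter (fun j : Fin N =>
              ((i, j) ∈ E ∧ (j, i) ∉ E) ∧ y (i, j) = h)).card)) := by
  classical
  set G : Fin N → ℝ := fun j =>
      (∑ m, p m * ((if (i, j) ∈ E then q (y (i, j)) ℓ m else 1) *
                   (if (j, i) ∈ E then q (y (j, i)) m ℓ else 1))) with hG
  set s : Finset (Fin N) := univ.erase i with hs
  set P1 : Fin N → Prop := fun j => (i, j) ∈ E ∧ (j, i) ∈ E with hP1
  set P2 : Fin N → Prop := fun j => (j, i) ∈ E ∧ (i, j) ∉ E with hP2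
  set P3 : Fin N → Prop := fun j => (i, j) ∈ E ∧ (j, i) ∉ E with hP3
  rw [← Finset.prod_filter_mul_prod_filter_not s P1 G,
      ← Finset.prod_filter_mul_prod_filter_not (s.filter (fun j => ¬ P1 j)) P2 G,
      ← Finset.prod_filter_mul_prod_filter_not
        ((s.filter (fun j => ¬ P1 j)).filter (fun j => ¬ P2 j)) P3 G]
  have hrest : ∏ j ∈ ((s.filter (fun j => ¬ P1 j)).filter (fun j => ¬ P2 j)).filter
      (fun j => ¬ P3 j), G j = 1 := by
    refine Finset.prod_eq_one fun j hj => ?_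
    simp only [Finset.mem_filter, hP1, hP2, hP3] at hj
    have hij : (i, j) ∉ E := by
      intro h
      by_cases hji : (j, i) ∈ E
      · exact hj.1.1.2 ⟨h, hji⟩
      · exact hj.2 ⟨h, hji⟩
    have hji : (j, i) ∉ E := fun h => hj.1.2 ⟨h, hij⟩
    simp [hG, hij, hji, hpsum]
  have h1 : ∏ j ∈ s.filter P1, G j
      = ∏ h : Fin R, ∏ k : Fin R,
        (∑ m, q h ℓ m * q k m ℓ * p m)
          ^ ((univ.filter (fun j : Fin N =>
              ((i, j) ∈ E ∧ (j, i) ∈ E) ∧ y (i, j) = h ∧ y (j, i) = k)).card) := by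
    have step : ∏ j ∈ s.filter P1, G j
        = ∏ j ∈ s.filter P1,
          (fun hk : Fin R × Fin R => ∑ m, q hk.1 ℓ m * q hk.2 m ℓ * p m)
            ((fun j => (y (i, j), y (j, i))) j) := by
      refine Finset.prod_congr rfl fun j hj => ?_
      rw [Finset.mem_filter] at hj
      have h1 := hj.2.1
      have h2 := hj.2.2
      simp only [hG, if_pos h1, if_pos h2]
      exact Finset.sum_congr rfl fun m _ => by ring
    rw [step, thm1_fiber_prod (s.filter P1) (fun j => (y (i, j), y (j, i)))
      (fun hk : Fin R × Fin R => ∑ m, q hk.1 ℓ m * q hk.2 m ℓ * p m), Fintype.prod_prod_type]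
    refine Finset.prod_congr rfl fun h _ => Finset.prod_congr rfl fun k _ => ?_
    congr 2
    ext j
    have hne : (i, j) ∈ E → j ≠ i := fun hj hji => hE i (by rwa [hji] at hj)
    simp only [Finset.mem_filter, hs, hP1, Finset.mem_erase, Finset.mem_univ, true_and,
      Prod.mk.injEq, and_true]
    tauto
  have h2 : ∏ j ∈ (s.filter (fun j => ¬ P1 j)).filter P2, G j
      = ∏ h : Fin R,
        (∑ m, q h m ℓ * p m)
          ^ ((univ.filter (fun j : Fin N =>
              ((j, i) ∈ E ∧ (i, j) ∉ E) ∧ y (j, i) = h)).card) := by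
    have step : ∏ j ∈ (s.filter (fun j => ¬ P1 j)).filter P2, G j
        = ∏ j ∈ (s.filter (fun j => ¬ P1 j)).filter P2,
          (fun h : Fin R => ∑ m, q h m ℓ * p m) ((fun j => y (j, i)) j) := by
      refine Finset.prod_congr rfl fun j hj => ?_
      simp only [Finset.mem_filter, hP2] at hj
      simp only [hG, if_pos hj.2.1, if_neg hj.2.2]
      exact Finset.sum_congr rfl fun m _ => by ring
    rw [step, thm1_fiber_prod ((s.filter (fun j => ¬ P1 j)).filter P2) (fun j => y (j, i))
      (fun h : Fin R => ∑ m, q h m ℓ * p m)]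
    refine Finset.prod_congr rfl fun h _ => ?_
    congr 2
    ext j
    have hne : (j, i) ∈ E → j ≠ i := fun hj hji => hE i (by rwa [hji] at hj)
    simp only [Finset.mem_filter, hs, hP1, hP2, Finset.mem_erase, Finset.mem_univ, true_and,
      and_true]
    tauto
  have h3 : ∏ j ∈ ((s.filter (fun j => ¬ P1 j)).filter (fun j => ¬ P2 j)).filter P3, G j
      = ∏ h : Fin R,
        (∑ m, q h ℓ m * p m)
          ^ ((univ.filter (fun j : Fin N =>
              ((i, j) ∈ E ∧ (j, i) ∉ E) ∧ y (i, j) = h)).card) := by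
    have step : ∏ j ∈ ((s.filter (fun j => ¬ P1 j)).filter (fun j => ¬ P2 j)).filter P3, G j
        = ∏ j ∈ ((s.filter (fun j => ¬ P1 j)).filter (fun j => ¬ P2 j)).filter P3,
          (fun h : Fin R => ∑ m, q h ℓ m * p m) ((fun j => y (i, j)) j) := by
      refine Finset.prod_congr rfl fun j hj => ?_
      simp only [Finset.mem_filter, hP3] at hj
      simp only [hG, if_pos hj.2.1, if_neg hj.2.2]
      exact Finset.sum_congr rfl fun m _ => by ring
    rw [step, thm1_fiber_prod (((s.filter (fun j => ¬ P1 j)).filter (fun j => ¬ P2 j)).filter P3)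
      (fun j => y (i, j)) (fun h : Fin R => ∑ m, q h ℓ m * p m)]
    refine Finset.prod_congr rfl fun h _ => ?_
    congr 2
    ext j
    have hne : (i, j) ∈ E → j ≠ i := fun hj hji => hE i (by rwa [hji] at hj)
    simp only [Finset.mem_filter, hs, hP1, hP2, hP3, Finset.mem_erase, Finset.mem_univ, true_and,
      and_true]
    tauto
  rw [hrest, mul_one, h1, h2, h3]
  ring
end

section
variable {N C R : ℕ} (E : Finset (Fin N × Fin N))
    (p : Fin C → ℝ) (q : Fin R → Fin C → Fin C → ℝ)
    (y : Fin N × Fin N → Fin R) (i : Fin N) (ℓ : Fin C)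


lemma thm1_key (hE : ∀ j : Fin N, (j, j) ∉ E) (hqsum : ∀ ℓ m, ∑ h, q h ℓ m = 1) :
    ∑ ω : (Fin N → Fin C) × ({e // e ∈ E} → Fin R),
      ({ω : (Fin N → Fin C) × ({e // e ∈ E} → Fin R) | ω.1 i = ℓ} ∩
       {ω | ∀ e : {e // e ∈ E}, (e.1.1 = i ∨ e.1.2 = i) → ω.2 e = y e.1}).indicator
        (jointP E p q) ω
    = p ℓ * ∏ j ∈ univ.erase i,
        ∑ m, p m * ((if (i, j) ∈ E then q (y (i, j)) ℓ m else 1) *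
                    (if (j, i) ∈ E then q (y (j, i)) m ℓ else 1)) := by
  classical
  rw [Fintype.sum_prod_type]
  have hx_term : ∀ x : Fin N → Fin C,
      (∑ s : {e // e ∈ E} → Fin R,
        ({ω : (Fin N → Fin C) × ({e // e ∈ E} → Fin R) | ω.1 i = ℓ} ∩
         {ω | ∀ e : {e // e ∈ E}, (e.1.1 = i ∨ e.1.2 = i) → ω.2 e = y e.1}).indicator
          (jointP E p q) (x, s))
      = if x i = ℓ then
          (∏ j, p (x j)) * ∏ j ∈ univ.erase i,
            ((if (i, j) ∈ E then q (y (i, j)) ℓ (x j) else 1) *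
             (if (j, i) ∈ E then q (y (j, i)) (x j) ℓ else 1))
        else 0 := by
    intro x
    by_cases hx : x i = ℓ
    · rw [if_pos hx]
      have h1 : ∀ s : {e // e ∈ E} → Fin R,
          ({ω : (Fin N → Fin C) × ({e // e ∈ E} → Fin R) | ω.1 i = ℓ} ∩
           {ω | ∀ e : {e // e ∈ E}, (e.1.1 = i ∨ e.1.2 = i) → ω.2 e = y e.1}).indicator
            (jointP E p q) (x, s)
          = (∏ j, p (x j)) *
            (if (∀ e : {e // e ∈ E}, (e.1.1 = i ∨ e.1.2 = i) → s e = y e.1)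
              then ∏ e : {e // e ∈ E}, q (s e) (x e.1.1) (x e.1.2) else 0) := by
        intro s
        rw [Set.indicator_apply]
        by_cases hs : ∀ e : {e // e ∈ E}, (e.1.1 = i ∨ e.1.2 = i) → s e = y e.1
        · rw [if_pos hs, if_pos ⟨hx, hs⟩]
          rfl
        · rw [if_neg hs, if_neg (fun hmem => hs hmem.2), mul_zero]
      rw [Finset.sum_congr rfl fun s _ => h1 s, ← Finset.mul_sum,
        thm1_inner_sum E q y i hqsum x]
      congr 1
      calc ∏ e : {e // e ∈ E}, (if (e.1.1 = i ∨ e.1.2 = i)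
              then q (y e.1) (x e.1.1) (x e.1.2) else 1)
          = ∏ e ∈ E, (if (e.1 = i ∨ e.2 = i) then q (y e) (x e.1) (x e.2) else 1) :=
            Finset.prod_coe_sort E (fun e => if (e.1 = i ∨ e.2 = i)
              then q (y e) (x e.1) (x e.2) else 1)
        _ = ∏ e ∈ E.filter (fun e => e.1 = i ∨ e.2 = i), q (y e) (x e.1) (x e.2) :=
            (Finset.prod_filter _ _).symm
        _ = _ := thm1_edge_prod E q y i ℓ hE x hx
    · rw [if_neg hx]
      refine Finset.sum_eq_zero fun s _ => ?_
      rw [Set.indicator_apply, if_neg (fun hmem => hx hmem.1)]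
  rw [Finset.sum_congr rfl fun x _ => hx_term x, thm1_state_sum p i ℓ
    (fun j m => (if (i, j) ∈ E then q (y (i, j)) ℓ m else 1) *
                (if (j, i) ∈ E then q (y (j, i)) m ℓ else 1))]
end
section
variable {N C R : ℕ} (E : Finset (Fin N × Fin N))
    (p : Fin C → ℝ) (q : Fin R → Fin C → Fin C → ℝ)
    (y : Fin N × Fin N → Fin R) (i : Fin N)

lemma thm1_total :
    prEvent E p q {ω | ∀ e : {e // e ∈ E}, (e.1.1 = i ∨ e.1.2 = i) → ω.2 e = y e.1}
    = ∑ ℓ' : Fin C, prEvent E p q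
        ({ω | ω.1 i = ℓ'} ∩
         {ω | ∀ e : {e // e ∈ E}, (e.1.1 = i ∨ e.1.2 = i) → ω.2 e = y e.1}) := by
  classical
  unfold prEvent
  rw [Finset.sum_comm]
  refine Finset.sum_congr rfl fun ω _ => ?_
  rw [Set.indicator_apply]
  by_cases hB : ω ∈ {ω : (Fin N → Fin C) × ({e // e ∈ E} → Fin R) |
      ∀ e : {e // e ∈ E}, (e.1.1 = i ∨ e.1.2 = i) → ω.2 e = y e.1}
  · rw [if_pos hB]
    have : ∀ ℓ' : Fin C,
        ({ω : (Fin N → Fin C) × ({e // e ∈ E} → Fin R) | ω.1 i = ℓ'} ∩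
         {ω | ∀ e : {e // e ∈ E}, (e.1.1 = i ∨ e.1.2 = i) → ω.2 e = y e.1}).indicator
          (jointP E p q) ω
        = if ω.1 i = ℓ' then jointP E p q ω else 0 := by
      intro ℓ'
      rw [Set.indicator_apply]
      by_cases hx : ω.1 i = ℓ'
      · rw [if_pos hx, if_pos ⟨hx, hB⟩]
      · rw [if_neg hx, if_neg (fun hmem => hx hmem.1)]
    rw [Finset.sum_congr rfl fun ℓ' _ => this ℓ']
    rw [Finset.sum_ite_eq Finset.univ (ω.1 i) (fun _ => jointP E p q ω)]
    simp
  · rw [if_neg hB]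
    refine (Finset.sum_eq_zero fun ℓ' _ => ?_).symm
    rw [Set.indicator_apply, if_neg (fun hmem => hB hmem.2)]

lemma thm1_key' (hE : ∀ j : Fin N, (j, j) ∉ E) (hpsum : ∑ m, p m = 1)
    (hqsum : ∀ ℓ m, ∑ h, q h ℓ m = 1) (ℓ : Fin C) :
    prEvent E p q
        ({ω | ω.1 i = ℓ} ∩
         {ω | ∀ e : {e // e ∈ E}, (e.1.1 = i ∨ e.1.2 = i) → ω.2 e = y e.1})
    = vval E p q y i ℓ := by
  unfold prEvent
  rw [thm1_key E p q y i ℓ hE hqsum, thm1_comb E p q y i ℓ hE hpsum, vval]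
  ring

end

theorem stmt_1 (N C R : ℕ) (hN : 1 ≤ N) (hC : 1 ≤ C) (hR : 1 ≤ R)
    (E : Finset (Fin N × Fin N)) (hE : ∀ i : Fin N, (i, i) ∉ E)
    (p : Fin C → ℝ) (hp : ∀ ℓ, 0 ≤ p ℓ) (hpsum : ∑ ℓ, p ℓ = 1)
    (q : Fin R → Fin C → Fin C → ℝ) (hq : ∀ h ℓ m, 0 ≤ q h ℓ m)
    (hqsum : ∀ ℓ m, ∑ h, q h ℓ m = 1)
    (y : Fin N × Fin N → Fin R) (i : Fin N)
    (hZ : 0 < ∑ ℓ', vval E p q y i ℓ') (ℓ : Fin C) :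
    prEvent E p q
        ({ω | ω.1 i = ℓ} ∩
         {ω | ∀ e : {e // e ∈ E}, (e.1.1 = i ∨ e.1.2 = i) → ω.2 e = y e.1})
      / prEvent E p q
        {ω | ∀ e : {e // e ∈ E}, (e.1.1 = i ∨ e.1.2 = i) → ω.2 e = y e.1}
    = vval E p q y i ℓ / ∑ ℓ', vval E p q y i ℓ' := by
  rw [thm1_key' E p q y i hE hpsum hqsum ℓ, thm1_total E p q y i,
    Finset.sum_congr rfl fun ℓ' _ => thm1_key' E p q y i hE hpsum hqsum ℓ']
end

section
/- For every agent i ∈ {1,…,N}, the probability of the joint event {x(i) = ℓ and y'(e) = y(e) for every edge e ∈ E_S incident to i} equals p_ℓ · ∏_{j ∈ N↔_i} ( Σ_{m=1}^C p_{y(i,j)|ℓ,m} · p_{y(j,i)|m,ℓ} · p_m ) · ∏_{j ∈ N←_i} ( Σ_{m=1}^C p_{y(j,i)|m,ℓ} · p_m ) · ∏_{j ∈ N→_i} ( Σ_{m=1}^C p_{y(i,j)|ℓ,m} · p_m ); that is, conditionally on the state of node i, the scores exchanged with distinct neighbors factorize as a product over neighbors. -/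
open Finset

/-- auxiliary: an `if` on a universally quantified condition versus a product of `if`s. -/
private lemma ite_forall_prod {α : Type*} [Fintype α] (P : α → Prop) [DecidablePred P]
    (f : α → ℝ) :
    (if (∀ a, P a) then ∏ a, f a else 0) = ∏ a, if P a then f a else 0 := by
  by_cases h : ∀ a, P a
  · rw [if_pos h]; exact Finset.prod_congr rfl fun a _ => (if_pos (h a)).symm
  · obtain ⟨a, ha⟩ := not_forall.mp h
    rw [if_neg h]
    exact (Finset.prod_eq_zero (mem_univ a) (by simp [ha])).symm

/-- auxiliary: a sum over functions of a product over coordinates factorizes. -/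
private lemma sum_prod_pi {α : Type*} [Fintype α] [DecidableEq α] {β : Type*} [Fintype β]
    (G : α → β → ℝ) :
    ∑ s : α → β, ∏ a, G a (s a) = ∏ a, ∑ b, G a b := by
  rw [Finset.prod_univ_sum, Fintype.piFinset_univ]

/-- The vertex-factorized weight used in the proof of `stmt_2`. -/
private noncomputable def auxF {N C R : ℕ} (E : Finset (Fin N × Fin N)) (p : Fin C → ℝ)
    (q : Fin R → Fin C → Fin C → ℝ) (y : Fin N × Fin N → Fin R) (i : Fin N) (ℓ : Fin C) :
    Fin N → Fin C → ℝ := fun k m =>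
  if k = i then (if m = ℓ then p ℓ else 0)
  else p m * (if (i, k) ∈ E then q (y (i, k)) ℓ m else 1)
    * (if (k, i) ∈ E then q (y (k, i)) m ℓ else 1)

theorem stmt_2 (N C R : ℕ) (hN : 1 ≤ N) (hC : 1 ≤ C) (hR : 1 ≤ R)
    (E : Finset (Fin N × Fin N)) (hE : ∀ i : Fin N, (i, i) ∉ E)
    (p : Fin C → ℝ) (hp : ∀ ℓ, 0 ≤ p ℓ) (hpsum : ∑ ℓ, p ℓ = 1)
    (q : Fin R → Fin C → Fin C → ℝ) (hq : ∀ h ℓ m, 0 ≤ q h ℓ m)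
    (hqsum : ∀ ℓ m, ∑ h, q h ℓ m = 1)
    (y : Fin N × Fin N → Fin R) (i : Fin N) (ℓ : Fin C) :
    prEvent E p q
      {ω | ω.1 i = ℓ ∧
        ∀ e : {e // e ∈ E}, (e.1.1 = i ∨ e.1.2 = i) → ω.2 e = y e.1}
    = p ℓ
      * (∏ j ∈ univ.filter (fun j : Fin N => (i, j) ∈ E ∧ (j, i) ∈ E),
          ∑ m, q (y (i, j)) ℓ m * q (y (j, i)) m ℓ * p m)
      * (∏ j ∈ univ.filter (fun j : Fin N => (j, i) ∈ E ∧ (i, j) ∉ E),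
          ∑ m, q (y (j, i)) m ℓ * p m)
      * (∏ j ∈ univ.filter (fun j : Fin N => (i, j) ∈ E ∧ (j, i) ∉ E),
          ∑ m, q (y (i, j)) ℓ m * p m) := by
  classical
  rw [prEvent, Fintype.sum_prod_type]
  -- Step 1: sum out the scores for a fixed state assignment `x`.
  have step1 : ∀ x : Fin N → Fin C,
      (∑ s : {e // e ∈ E} → Fin R,
        ({ω : (Fin N → Fin C) × ({e // e ∈ E} → Fin R) | ω.1 i = ℓ ∧
          ∀ e : {e // e ∈ E}, (e.1.1 = i ∨ e.1.2 = i) → ω.2 e = y e.1}).indicator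
          (jointP E p q) (x, s))
      = (if x i = ℓ then ∏ k, p (x k) else 0) *
        ∏ e : {e // e ∈ E},
          (if e.1.1 = i ∨ e.1.2 = i then q (y e.1) (x e.1.1) (x e.1.2) else 1) := by
    intro x
    have h1 : ∀ s : {e // e ∈ E} → Fin R,
        ({ω : (Fin N → Fin C) × ({e // e ∈ E} → Fin R) | ω.1 i = ℓ ∧
          ∀ e : {e // e ∈ E}, (e.1.1 = i ∨ e.1.2 = i) → ω.2 e = y e.1}).indicator
          (jointP E p q) (x, s)
        = (if x i = ℓ then ∏ k, p (x k) else 0) *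
          ∏ e : {e // e ∈ E},
            (if ((e.1.1 = i ∨ e.1.2 = i) → s e = y e.1)
              then q (s e) (x e.1.1) (x e.1.2) else 0) := by
      intro s
      rw [← ite_forall_prod]
      simp only [Set.indicator_apply, Set.mem_setOf_eq, jointP]
      by_cases hx : x i = ℓ <;>
        by_cases hs : ∀ e : {e // e ∈ E}, (e.1.1 = i ∨ e.1.2 = i) → s e = y e.1 <;>
        simp [hx, hs]
    rw [Finset.sum_congr rfl fun s _ => h1 s, ← Finset.mul_sum]
    congr 1
    refine (sum_prod_pi fun (e : {e // e ∈ E}) h =>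
      if ((e : Fin N × Fin N).1 = i ∨ (e : Fin N × Fin N).2 = i → h = y e)
        then q h (x (e : Fin N × Fin N).1) (x (e : Fin N × Fin N).2) else 0).trans ?_
    refine Finset.prod_congr rfl fun e _ => ?_
    by_cases he : e.1.1 = i ∨ e.1.2 = i
    · simp [he]
    · simp [he, hqsum]
  -- Step 2: the summand factorizes over vertices.
  have step2 : ∀ x : Fin N → Fin C,
      (if x i = ℓ then ∏ k, p (x k) else 0) *
        ∏ e : {e // e ∈ E},
          (if e.1.1 = i ∨ e.1.2 = i then q (y e.1) (x e.1.1) (x e.1.2) else 1)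
      = ∏ k, auxF E p q y i ℓ k (x k) := by
    intro x
    by_cases hx : x i = ℓ
    · rw [if_pos hx]
      have edge : (∏ e : {e // e ∈ E},
            (if e.1.1 = i ∨ e.1.2 = i then q (y e.1) (x e.1.1) (x e.1.2) else 1))
          = (∏ k, (if (i, k) ∈ E then q (y (i, k)) ℓ (x k) else 1)) *
            (∏ k, (if (k, i) ∈ E then q (y (k, i)) (x k) ℓ else 1)) := by
        rw [Finset.prod_coe_sort E
          (fun e => if e.1 = i ∨ e.2 = i then q (y e) (x e.1) (x e.2) else 1)]
        have split : ∀ e ∈ E,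
            (if e.1 = i ∨ e.2 = i then q (y e) (x e.1) (x e.2) else 1)
            = (if e.1 = i then q (y e) (x e.1) (x e.2) else 1) *
              (if e.2 = i then q (y e) (x e.1) (x e.2) else 1) := by
          intro e he
          by_cases h1 : e.1 = i
          · by_cases h2 : e.2 = i
            · exact absurd he (by rw [show e = (i, i) from Prod.ext h1 h2]; exact hE i)
            · simp [h1, h2]
          · by_cases h2 : e.2 = i <;> simp [h1, h2]
        rw [Finset.prod_congr rfl split, Finset.prod_mul_distrib]
        congr 1
        · have himg : E.filter (fun e => e.1 = i)
              = (univ.filter fun k : Fin N => (i, k) ∈ E).image (fun k => (i, k)) := by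
            ext ⟨a, b⟩
            simp only [mem_filter, mem_image, mem_univ, true_and, Prod.mk.injEq]
            constructor
            · rintro ⟨hab, rfl⟩; exact ⟨b, hab, rfl, rfl⟩
            · rintro ⟨j, hj, rfl, rfl⟩; exact ⟨hj, rfl⟩
          rw [← Finset.prod_filter, himg,
            Finset.prod_image (fun a _ b _ h => by simpa using h), Finset.prod_filter]
          refine Finset.prod_congr rfl fun k _ => ?_
          by_cases hk : (i, k) ∈ E <;> simp [hk, hx]
        · have himg : E.filter (fun e => e.2 = i)
              = (univ.filter fun k : Fin N => (k, i) ∈ E).image (fun k => (k, i)) := by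
            ext ⟨a, b⟩
            simp only [mem_filter, mem_image, mem_univ, true_and, Prod.mk.injEq]
            constructor
            · rintro ⟨hab, rfl⟩; exact ⟨a, hab, rfl, rfl⟩
            · rintro ⟨j, hj, rfl, rfl⟩; exact ⟨hj, rfl⟩
          rw [← Finset.prod_filter, himg,
            Finset.prod_image (fun a _ b _ h => by simpa using h), Finset.prod_filter]
          refine Finset.prod_congr rfl fun k _ => ?_
          by_cases hk : (k, i) ∈ E <;> simp [hk, hx]
      rw [edge]
      have hFk : ∀ k, auxF E p q y i ℓ k (x k)
          = p (x k) * ((if (i, k) ∈ E then q (y (i, k)) ℓ (x k) else 1) *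
            (if (k, i) ∈ E then q (y (k, i)) (x k) ℓ else 1)) := by
        intro k
        by_cases hk : k = i
        · subst hk; simp [auxF, hx, hE k]
        · simp [auxF, hk, mul_assoc]
      rw [Finset.prod_congr rfl fun k _ => hFk k, Finset.prod_mul_distrib,
        Finset.prod_mul_distrib]
      try ring
    · rw [if_neg hx, zero_mul]
      exact (Finset.prod_eq_zero (mem_univ i) (by simp [auxF, hx])).symm
  rw [Finset.sum_congr rfl fun x _ => (step1 x).trans (step2 x), sum_prod_pi,
    ← Finset.mul_prod_erase univ _ (mem_univ i)]
  have hFi : (∑ m, auxF E p q y i ℓ i m) = p ℓ := by simp [auxF]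
  rw [hFi]
  -- Step 3: compute the per-vertex sums and regroup over neighbor types.
  have hS : ∀ k ∈ univ.erase i, (∑ m, auxF E p q y i ℓ k m)
      = (if (i, k) ∈ E ∧ (k, i) ∈ E then
          ∑ m, q (y (i, k)) ℓ m * q (y (k, i)) m ℓ * p m else 1)
        * (if (k, i) ∈ E ∧ (i, k) ∉ E then ∑ m, q (y (k, i)) m ℓ * p m else 1)
        * (if (i, k) ∈ E ∧ (k, i) ∉ E then ∑ m, q (y (i, k)) ℓ m * p m else 1) := by
    intro k hk
    have hki : k ≠ i := Finset.ne_of_mem_erase hk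
    simp only [auxF, if_neg hki]
    by_cases h1 : (i, k) ∈ E <;> by_cases h2 : (k, i) ∈ E <;>
      simp [h1, h2, hpsum] <;>
      try exact Finset.sum_congr rfl fun m _ => by ring
  rw [Finset.prod_congr rfl hS,
    Finset.prod_erase (s := univ)
      (f := fun k =>
        (if (i, k) ∈ E ∧ (k, i) ∈ E then
          ∑ m, q (y (i, k)) ℓ m * q (y (k, i)) m ℓ * p m else 1)
        * (if (k, i) ∈ E ∧ (i, k) ∉ E then ∑ m, q (y (k, i)) m ℓ * p m else 1)
        * (if (i, k) ∈ E ∧ (k, i) ∉ E then ∑ m, q (y (i, k)) ℓ m * p m else 1))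
      (by simp [hE i]),
    Finset.prod_mul_distrib, Finset.prod_mul_distrib,
    Finset.prod_filter, Finset.prod_filter, Finset.prod_filter]
  ring
end

section
/- For every agent i ∈ {1,…,N}, the marginal probability of the event {y'(j,i) = y(j,i) for every in-edge (j,i) ∈ E_S} equals Σ_{ℓ=1}^C p_ℓ · ∏_{h=1}^R ( Σ_{m=1}^C p_{h|m,ℓ} · p_m )^{n_i^{(h)}}, where n_i^{(h)} = |{j ∈ N^I_i : y(j,i) = h}| and N^I_i = {j : (j,i) ∈ E_S}; i.e., the per-node marginal depends on the received scores only through the score-count vector (n_i^{(1)},…,n_i^{(R)}). -/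
open Finset

theorem stmt_8 (N C R : ℕ) (hN : 1 ≤ N) (hC : 1 ≤ C) (hR : 1 ≤ R)
    (E : Finset (Fin N × Fin N)) (hE : ∀ i : Fin N, (i, i) ∉ E)
    (p : Fin C → ℝ) (hp : ∀ ℓ, 0 ≤ p ℓ) (hpsum : ∑ ℓ, p ℓ = 1)
    (q : Fin R → Fin C → Fin C → ℝ) (hq : ∀ h ℓ m, 0 ≤ q h ℓ m)
    (hqsum : ∀ ℓ m, ∑ h, q h ℓ m = 1)
    (y : Fin N × Fin N → Fin R) (i : Fin N) :
    prEvent E p q {ω | ∀ e : {e // e ∈ E}, e.1.2 = i → ω.2 e = y e.1}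
      = ∑ ℓ, p ℓ * ∏ h : Fin R,
          (∑ m, q h m ℓ * p m)
            ^ ((univ.filter (fun j : Fin N => (j, i) ∈ E ∧ y (j, i) = h)).card) := by
  classical
  set A : Set ((Fin N → Fin C) × ({e // e ∈ E} → Fin R)) :=
    {ω | ∀ e : {e // e ∈ E}, e.1.2 = i → ω.2 e = y e.1} with hA
  -- the per-edge weight, as a function of the score h
  set g : (Fin N → Fin C) → {e // e ∈ E} → Fin R → ℝ :=
    fun x e h => if e.1.2 = i then (if h = y e.1 then q h (x e.1.1) (x e.1.2) else 0)
      else q h (x e.1.1) (x e.1.2) with hg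
  -- Step 1: indicator as a product
  have hind : ∀ (x : Fin N → Fin C) (f : {e // e ∈ E} → Fin R),
      A.indicator (jointP E p q) (x, f)
        = (∏ j, p (x j)) * ∏ e : {e // e ∈ E}, g x e (f e) := by
    intro x f
    by_cases hmem : (x, f) ∈ A
    · rw [Set.indicator_of_mem hmem, jointP]
      congr 1
      refine Finset.prod_congr rfl fun e _ => ?_
      by_cases he : e.1.2 = i
      · simp [hg, he, show f e = y e.1 from hmem e he]
      · simp [hg, he]
    · rw [Set.indicator_of_notMem hmem]
      have : ∃ e : {e // e ∈ E}, e.1.2 = i ∧ f e ≠ y e.1 := by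
        by_contra hcon
        push_neg at hcon
        exact hmem fun e he => hcon e he
      obtain ⟨e, he, hne⟩ := this
      have : g x e (f e) = 0 := by simp [hg, he, hne]
      rw [Finset.prod_eq_zero (Finset.mem_univ e) this, mul_zero]
  -- Step 2: sum out the scores f
  have hsumf : ∀ x : Fin N → Fin C,
      ∑ f : {e // e ∈ E} → Fin R, ∏ e : {e // e ∈ E}, g x e (f e)
        = ∏ e : {e // e ∈ E}, ∑ h, g x e h := by
    intro x
    rw [Finset.prod_univ_sum (fun _ => (univ : Finset (Fin R))) (g x),
      Fintype.piFinset_univ]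
  have hsumg : ∀ (x : Fin N → Fin C) (e : {e // e ∈ E}),
      ∑ h, g x e h = if e.1.2 = i then q (y e.1) (x e.1.1) (x e.1.2) else 1 := by
    intro x e
    by_cases he : e.1.2 = i
    · rw [show (∑ h, g x e h) = ∑ h : Fin R,
          if h = y e.1 then q h (x e.1.1) (x e.1.2) else 0 from by simp [hg, he],
        Finset.sum_ite_eq' univ (y e.1) (fun h => q h (x e.1.1) (x e.1.2))]
      simp [he]
    · simp only [hg, he, if_false]
      exact hqsum _ _
  -- the in-neighborhood
  set T : Finset (Fin N) := univ.filter (fun j => (j, i) ∈ E) with hT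
  -- Step 3: reindex the edge product by source vertex
  have hedge : ∀ x : Fin N → Fin C,
      (∏ e : {e // e ∈ E}, if e.1.2 = i then q (y e.1) (x e.1.1) (x e.1.2) else 1)
        = ∏ j, (if (j, i) ∈ E then q (y (j, i)) (x j) (x i) else 1) := by
    intro x
    rw [Finset.univ_eq_attach,
      Finset.prod_attach E (fun e => if e.2 = i then q (y e) (x e.1) (x e.2) else 1),
      ← Finset.prod_filter (fun e : Fin N × Fin N => e.2 = i)
        (fun e => q (y e) (x e.1) (x e.2)),
      ← Finset.prod_filter (fun j : Fin N => (j, i) ∈ E)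
        (fun j => q (y (j, i)) (x j) (x i))]
    refine Finset.prod_nbij' (fun e => e.1) (fun j => (j, i)) ?_ ?_ ?_ ?_ ?_
    · rintro ⟨a, b⟩ he
      simp only [Finset.mem_filter] at he
      obtain ⟨h1, h2⟩ := he
      subst h2
      exact Finset.mem_filter.mpr ⟨Finset.mem_univ _, h1⟩
    · intro j hj
      exact Finset.mem_filter.mpr ⟨(Finset.mem_filter.mp hj).2, rfl⟩
    · rintro ⟨a, b⟩ he
      simp only [Finset.mem_filter] at he
      exact congrArg _ he.2.symm
    · intro j hj; rfl
    · rintro ⟨a, b⟩ he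
      simp only [Finset.mem_filter] at he
      obtain ⟨h1, h2⟩ := he
      subst h2
      rfl
  -- the ℓ-indexed factor functions
  set H : Fin C → Fin N → Fin C → ℝ := fun ℓ j c =>
    if j = i then (if c = ℓ then p ℓ else 0)
    else p c * (if (j, i) ∈ E then q (y (j, i)) c ℓ else 1) with hH
  -- Step 4: condition on the state of agent i
  have hcond : ∀ x : Fin N → Fin C,
      (∏ j, p (x j)) * ∏ j, (if (j, i) ∈ E then q (y (j, i)) (x j) (x i) else 1)
        = ∑ ℓ, ∏ j, H ℓ j (x j) := by
    intro x
    rw [← Finset.prod_mul_distrib]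
    rw [Finset.sum_eq_single (x i)]
    · refine (Finset.prod_congr rfl fun j _ => ?_).symm
      by_cases hj : j = i
      · subst hj
        simp [hH, hE j]
      · simp [hH, hj]
    · intro ℓ _ hne
      refine Finset.prod_eq_zero (Finset.mem_univ i) ?_
      simp [hH, Ne.symm hne]
    · intro habs; exact absurd (Finset.mem_univ _) habs
  -- Step 5: factorize the x-sum for each ℓ
  have hfact : ∀ ℓ : Fin C,
      ∑ x : Fin N → Fin C, ∏ j, H ℓ j (x j) = ∏ j, ∑ c, H ℓ j c := by
    intro ℓ
    rw [Finset.prod_univ_sum (fun _ => (univ : Finset (Fin C))) (H ℓ),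
      Fintype.piFinset_univ]
  have hHsum : ∀ (ℓ : Fin C) (j : Fin N),
      ∑ c, H ℓ j c = if j = i then p ℓ
        else if (j, i) ∈ E then (∑ m, q (y (j, i)) m ℓ * p m) else 1 := by
    intro ℓ j
    by_cases hj : j = i
    · simp only [hH, hj, if_true]
      rw [Finset.sum_ite_eq' univ ℓ (fun _ => p ℓ)]
      simp
    · simp only [hH, hj, if_false]
      by_cases hje : (j, i) ∈ E
      · simp only [hje, if_true]
        exact Finset.sum_congr rfl fun m _ => by ring
      · simp only [hje, if_false, mul_one]
        exact hpsum
  -- Step 6: evaluate the factorized product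
  have hprod : ∀ ℓ : Fin C,
      (∏ j, ∑ c, H ℓ j c)
        = p ℓ * ∏ h : Fin R, (∑ m, q h m ℓ * p m)
            ^ ((univ.filter (fun j : Fin N => (j, i) ∈ E ∧ y (j, i) = h)).card) := by
    intro ℓ
    have h1 : ∀ j : Fin N, (∑ c, H ℓ j c)
        = (if j = i then p ℓ else 1)
          * (if (j, i) ∈ E then (∑ m, q (y (j, i)) m ℓ * p m) else 1) := by
      intro j
      rw [hHsum]
      by_cases hj : j = i
      · subst hj
        simp [hE j]
      · simp [hj]
    simp only [h1]
    rw [Finset.prod_mul_distrib, Finset.prod_ite_eq' univ i (fun _ => p ℓ)]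
    simp only [Finset.mem_univ, if_true]
    congr 1
    rw [← Finset.prod_filter (fun j : Fin N => (j, i) ∈ E)
      (fun j => ∑ m, q (y (j, i)) m ℓ * p m)]
    rw [← Finset.prod_fiberwise_of_maps_to
      (fun j hj => Finset.mem_univ (y (j, i)))
      (fun j => ∑ m, q (y (j, i)) m ℓ * p m)]
    refine Finset.prod_congr rfl fun h _ => ?_
    rw [Finset.filter_filter]
    rw [Finset.prod_congr rfl
      (fun j hj => by
        simp only [Finset.mem_filter] at hj
        rw [hj.2.2]),
      Finset.prod_const]
  -- Put everything together
  calc prEvent E p q A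
      = ∑ x : Fin N → Fin C, ∑ f : {e // e ∈ E} → Fin R,
          A.indicator (jointP E p q) (x, f) := by
        rw [prEvent, Fintype.sum_prod_type]
    _ = ∑ x : Fin N → Fin C, (∏ j, p (x j)) * ∏ e : {e // e ∈ E}, ∑ h, g x e h := by
        refine Finset.sum_congr rfl fun x _ => ?_
        simp only [hind, ← Finset.mul_sum]
        rw [hsumf x]
    _ = ∑ x : Fin N → Fin C, ∑ ℓ, ∏ j, H ℓ j (x j) := by
        refine Finset.sum_congr rfl fun x _ => ?_
        rw [show (∏ e : {e // e ∈ E}, ∑ h, g x e h)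
            = ∏ j, (if (j, i) ∈ E then q (y (j, i)) (x j) (x i) else 1) from by
          rw [Finset.prod_congr rfl fun e _ => hsumg x e]; exact hedge x]
        exact hcond x
    _ = ∑ ℓ, ∑ x : Fin N → Fin C, ∏ j, H ℓ j (x j) := Finset.sum_comm
    _ = ∑ ℓ, p ℓ * ∏ h : Fin R, (∑ m, q h m ℓ * p m)
          ^ ((univ.filter (fun j : Fin N => (j, i) ∈ E ∧ y (j, i) = h)).card) := by
        refine Finset.sum_congr rfl fun ℓ _ => ?_
        rw [hfact ℓ, hprod ℓ]
end

section
/- The node-based relaxed likelihood, defined as L_NR(y) := ∏_{i=1}^N M_i(y), where M_i(y) is the marginal probability under the joint model of the event {y'(j,i) = y(j,i) for every in-edge (j,i) ∈ E_S}, satisfies L_NR(y) = ∏_{i=1}^N Σ_{ℓ=1}^C p_ℓ · ∏_{h=1}^R ( Σ_{m=1}^C p_{h|m,ℓ} · p_m )^{n_i^{(h)}}, where n_i^{(h)} = |{j : (j,i) ∈ E_S and y(j,i) = h}|. Moreover, if every factor Σ_{ℓ=1}^C p_ℓ · ∏_{h=1}^R ( Σ_{m=1}^C p_{h|m,ℓ}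 · p_m )^{n_i^{(h)}} is strictly positive, then log L_NR(y) = Σ_{i=1}^N g(n_i) with g(n_i) := log( Σ_{ℓ=1}^C p_ℓ · ∏_{h=1}^R ( Σ_{m=1}^C p_{h|m,ℓ} · p_m )^{n_i^{(h)}} ). -/
open Finset

/-! The event only constrains the scores on the edges into `i`, so summing out every other
score replaces its factor by `∑ h, q h ℓ m = 1`. What is left is `∏ p (x k)` times the product,
over the in-neighbours `j` of `i`, of `q (y (j, i)) (x j) (x i)`. Once the state `ℓ = x i` is
fixed, this is a product of functions of the single coordinates `x k`, `k ≠ i` (as `(i, i) ∉ E`,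
`i` is not its own in-neighbour), so the sum over them factors: each in-neighbour contributes
`∑ m, q (y (j, i)) m ℓ * p m` and every other node `∑ m, p m = 1`. Grouping the in-neighbours by
their score gives the powers. -/

lemma sum_pi_ite_forall_prod {ι α M : Type*} [Fintype ι] [DecidableEq ι] [Fintype α]
    [CommSemiring M] (P : ι → α → Prop) [∀ i, DecidablePred (P i)] (f : ι → α → M) :
    ∑ g : ι → α, (if ∀ i, P i (g i) then ∏ i, f i (g i) else 0)
      = ∏ i, ∑ a with P i a, f i a := by
  rw [prod_univ_sum, ← sum_filter]
  congr 1
  ext g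
  simp [Fintype.mem_piFinset]

lemma sum_pi_prod_split_at {ι α M : Type*} [Fintype ι] [DecidableEq ι] [Fintype α]
    [DecidableEq α] [CommSemiring M] (i : ι) (F : α → ι → α → M) :
    ∑ x : ι → α, ∏ k, F (x i) k (x k)
      = ∑ ℓ, F ℓ i ℓ * ∏ k ∈ univ.erase i, ∑ a, F ℓ k a := by
  rw [← sum_fiberwise univ (fun x : ι → α => x i)]
  refine sum_congr rfl fun ℓ _ => ?_
  calc ∑ x : ι → α with x i = ℓ, ∏ k, F (x i) k (x k)
      = ∑ x : ι → α, if ∀ k, (k = i → x k = ℓ) then ∏ k, F ℓ k (x k) else 0 := by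
        rw [sum_filter]
        refine sum_congr rfl fun x _ => ?_
        simp only [forall_eq]
        split_ifs with hx <;> simp [hx]
    _ = F ℓ i ℓ * ∏ k ∈ univ.erase i, ∑ a, F ℓ k a := by
        rw [sum_pi_ite_forall_prod (fun k a => k = i → a = ℓ),
          ← mul_prod_erase univ _ (mem_univ i)]
        congr 1
        · simp [filter_eq']
        · refine prod_congr rfl fun k hk => ?_
          simp [(mem_erase.mp hk).1]

lemma prod_edges_ite_snd_eq {α M : Type*} [Fintype α] [DecidableEq α] [CommMonoid M]
    (E : Finset (α × α)) (i : α) (g : α × α → M) :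
    ∏ e : {e // e ∈ E}, (if e.1.2 = i then g e.1 else 1)
      = ∏ j, if (j, i) ∈ E then g (j, i) else 1 := by
  rw [prod_coe_sort E (fun e => if e.2 = i then g e else 1), ← Fintype.prod_ite_mem E,
    ← univ_product_univ, prod_product]
  refine prod_congr rfl fun j _ => ?_
  rw [Fintype.prod_eq_single i fun k hk => by simp [hk]]
  simp

lemma prod_ite_eq_prod_pow_card {ι κ M : Type*} [Fintype ι] [Fintype κ] [DecidableEq κ]
    [CommMonoid M] (P : ι → Prop) [DecidablePred P] (c : ι → κ) (f : κ → M) :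
    ∏ j, (if P j then f (c j) else 1) = ∏ h, f h ^ #{j | P j ∧ c j = h} := by
  rw [← prod_filter, ← prod_fiberwise _ c]
  refine prod_congr rfl fun h _ => ?_
  rw [filter_filter, prod_congr rfl fun j hj => by rw [(mem_filter.mp hj).2.2], prod_const]

lemma prEvent_inScores_eq_sum_states {N C R : ℕ} (E : Finset (Fin N × Fin N)) (p : Fin C → ℝ)
    (q : Fin R → Fin C → Fin C → ℝ) (hqsum : ∀ ℓ m, ∑ h, q h ℓ m = 1)
    (y : Fin N × Fin N → Fin R) (i : Fin N) :
    prEvent E p q {ω | ∀ e : {e // e ∈ E}, e.1.2 = i → ω.2 e = y e.1}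
      = ∑ x : Fin N → Fin C,
          ∏ k, p (x k) * (if (k, i) ∈ E then q (y (k, i)) (x k) (x i) else 1) := by
  rw [prEvent, Fintype.sum_prod_type]
  refine sum_congr rfl fun x _ => ?_
  have hind : ∀ s : {e // e ∈ E} → Fin R,
      Set.indicator {ω | ∀ e : {e // e ∈ E}, e.1.2 = i → ω.2 e = y e.1}
          (jointP E p q) (x, s)
        = (∏ k, p (x k)) * if ∀ e : {e // e ∈ E}, (e.1.2 = i → s e = y e.1)
            then ∏ e : {e // e ∈ E}, q (s e) (x e.1.1) (x e.1.2) else 0 := by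
    intro s
    simp only [Set.indicator_apply, Set.mem_ofPred_eq, jointP, mul_ite, mul_zero]
  simp_rw [hind, ← mul_sum]
  rw [sum_pi_ite_forall_prod (fun (e : {e // e ∈ E}) h => e.1.2 = i → h = y e.1)
      fun e h => q h (x e.1.1) (x e.1.2),
    prod_mul_distrib]
  congr 1
  rw [← prod_edges_ite_snd_eq E i fun e => q (y e) (x e.1) (x e.2)]
  refine prod_congr rfl fun e _ => ?_
  split_ifs with he
  · simp [he, filter_eq']
  · simp [he, hqsum]

lemma prEvent_inScores_eq {N C R : ℕ} (E : Finset (Fin N × Fin N))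
    (hE : ∀ i : Fin N, (i, i) ∉ E) (p : Fin C → ℝ) (hpsum : ∑ ℓ, p ℓ = 1)
    (q : Fin R → Fin C → Fin C → ℝ) (hqsum : ∀ ℓ m, ∑ h, q h ℓ m = 1)
    (y : Fin N × Fin N → Fin R) (i : Fin N) :
    prEvent E p q {ω | ∀ e : {e // e ∈ E}, e.1.2 = i → ω.2 e = y e.1}
      = ∑ ℓ, p ℓ * ∏ h : Fin R, (∑ m, q h m ℓ * p m)
          ^ #{j | (j, i) ∈ E ∧ y (j, i) = h} := by
  rw [prEvent_inScores_eq_sum_states E p q hqsum y i,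
    sum_pi_prod_split_at i fun ℓ k a => p a * if (k, i) ∈ E then q (y (k, i)) a ℓ else 1]
  refine sum_congr rfl fun ℓ _ => ?_
  have hmarg : ∀ k, ∑ a, p a * (if (k, i) ∈ E then q (y (k, i)) a ℓ else 1)
      = if (k, i) ∈ E then ∑ m, q (y (k, i)) m ℓ * p m else 1 := by
    intro k
    split_ifs
    · simp_rw [mul_comm]
    · simp [hpsum]
  simp only [hE i, if_false, mul_one, hmarg]
  rw [prod_erase _ (by simp [hE i]),
    prod_ite_eq_prod_pow_card _ (fun k => y (k, i)) fun h => ∑ m, q h m ℓ * p m]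

theorem stmt_9_general (N C R : ℕ)
    (E : Finset (Fin N × Fin N)) (hE : ∀ i : Fin N, (i, i) ∉ E)
    (p : Fin C → ℝ) (hpsum : ∑ ℓ, p ℓ = 1)
    (q : Fin R → Fin C → Fin C → ℝ)
    (hqsum : ∀ ℓ m, ∑ h, q h ℓ m = 1)
    (y : Fin N × Fin N → Fin R) :
    (∏ i : Fin N,
        prEvent E p q {ω | ∀ e : {e // e ∈ E}, e.1.2 = i → ω.2 e = y e.1})
      = (∏ i : Fin N, ∑ ℓ, p ℓ * ∏ h : Fin R,
          (∑ m, q h m ℓ * p m)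
            ^ ((univ.filter (fun j : Fin N => (j, i) ∈ E ∧ y (j, i) = h)).card))
    ∧ ((∀ i : Fin N,
          0 < ∑ ℓ, p ℓ * ∏ h : Fin R,
            (∑ m, q h m ℓ * p m)
              ^ ((univ.filter (fun j : Fin N => (j, i) ∈ E ∧ y (j, i) = h)).card)) →
        Real.log (∏ i : Fin N,
            prEvent E p q {ω | ∀ e : {e // e ∈ E}, e.1.2 = i → ω.2 e = y e.1})
          = ∑ i : Fin N, Real.log (∑ ℓ, p ℓ * ∏ h : Fin R,
              (∑ m, q h m ℓ * p m)
                ^ ((univ.filter (fun j : Fin N => (j, i) ∈ E ∧ y (j, i) = h)).card))) := by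
  have hprod := prod_congr rfl fun i (_ : i ∈ univ) =>
    prEvent_inScores_eq E hE p hpsum q hqsum y i
  refine ⟨hprod, fun hpos => ?_⟩
  rw [hprod, Real.log_prod fun i _ => (hpos i).ne']

theorem stmt_9 (N C R : ℕ) (hN : 1 ≤ N) (hC : 1 ≤ C) (hR : 1 ≤ R)
    (E : Finset (Fin N × Fin N)) (hE : ∀ i : Fin N, (i, i) ∉ E)
    (p : Fin C → ℝ) (hp : ∀ ℓ, 0 ≤ p ℓ) (hpsum : ∑ ℓ, p ℓ = 1)
    (q : Fin R → Fin C → Fin C → ℝ) (hq : ∀ h ℓ m, 0 ≤ q h ℓ m)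
    (hqsum : ∀ ℓ m, ∑ h, q h ℓ m = 1)
    (y : Fin N × Fin N → Fin R) :
    (∏ i : Fin N,
        prEvent E p q {ω | ∀ e : {e // e ∈ E}, e.1.2 = i → ω.2 e = y e.1})
      = (∏ i : Fin N, ∑ ℓ, p ℓ * ∏ h : Fin R,
          (∑ m, q h m ℓ * p m)
            ^ ((univ.filter (fun j : Fin N => (j, i) ∈ E ∧ y (j, i) = h)).card))
    ∧ ((∀ i : Fin N,
          0 < ∑ ℓ, p ℓ * ∏ h : Fin R,
            (∑ m, q h m ℓ * p m)
              ^ ((univ.filter (fun j : Fin N => (j, i) ∈ E ∧ y (j, i) = h)).card)) →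
        Real.log (∏ i : Fin N,
            prEvent E p q {ω | ∀ e : {e // e ∈ E}, e.1.2 = i → ω.2 e = y e.1})
          = ∑ i : Fin N, Real.log (∑ ℓ, p ℓ * ∏ h : Fin R,
              (∑ m, q h m ℓ * p m)
                ^ ((univ.filter (fun j : Fin N => (j, i) ∈ E ∧ y (j, i) = h)).card))) :=
  stmt_9_general N C R E hE p hpsum q hqsum y
end

section
/- Define the node-based relaxed joint model as follows: outcomes are triples (x, x^v, y') where x : {1,…,N} → {1,…,C} are true state indices, x^v : E_S → {1,…,C} assigns to each edge (i,j) a virtual state index of the evaluating node i, and y' : E_S → {1,…,R} are score indices, with probability mass function P_rel(x, x^v, y') = (∏_{i=1}^N p_{x(i)}) · ∏_{(i,j)∈E_S} [ p_{x^v(i,j)} · p_{y'(i,j)|x^v(i,j),x(j)} ]. Then for every score assignment y : E_S → {1,…,R}, the marginal probability under P_rel of the event {y' = y} equals ∏_{i=1}^N M_i(y), where M_i(y) is the marginal probability, under the original (unrelaxed) joint model P, of the event {y'(j,i) = y(j,i) for every in-edge (j,i) ∈ E_S}; i.e., the relaxed model's score likelihood equals the node-based relaxed likelihood L_NR(y)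 of the original model. -/
open Finset

/-- The probability mass function of the node-based relaxed model: outcomes are
triples `(x, xv, y')` of true states, virtual states of the evaluating endpoint of
each edge, and scores, with
`P_rel(x,xv,y') = (∏ i p_{x(i)}) · ∏ (i,j)∈E [ p_{xv(i,j)} · p_{y'(i,j)|xv(i,j),x(j)} ]`. -/
noncomputable def relP {N C R : ℕ} (E : Finset (Fin N × Fin N))
    (p : Fin C → ℝ) (q : Fin R → Fin C → Fin C → ℝ)
    (ω : (Fin N → Fin C) × ({e // e ∈ E} → Fin C) × ({e // e ∈ E} → Fin R)) : ℝ :=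
  (∏ i, p (ω.1 i)) *
    ∏ e : {e // e ∈ E}, (p (ω.2.1 e) * q (ω.2.2 e) (ω.2.1 e) (ω.1 e.1.2))

/-- The probability of an event `A` in the node-based relaxed model. -/
noncomputable def prRelEvent {N C R : ℕ} (E : Finset (Fin N × Fin N))
    (p : Fin C → ℝ) (q : Fin R → Fin C → Fin C → ℝ)
    (A : Set ((Fin N → Fin C) × ({e // e ∈ E} → Fin C) × ({e // e ∈ E} → Fin R))) :
    ℝ :=
  ∑ ω : (Fin N → Fin C) × ({e // e ∈ E} → Fin C) × ({e // e ∈ E} → Fin R),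
    A.indicator (relP E p q) ω

/-- Sum–product exchange over a function space. -/
lemma sum_fun_prod {ι κ : Type*} [Fintype ι] [DecidableEq ι] [Fintype κ]
    (F : ι → κ → ℝ) : ∑ g : ι → κ, ∏ i, F i (g i) = ∏ i, ∑ c, F i c := by
  rw [Finset.prod_univ_sum]
  simp [Fintype.piFinset_univ]

/-- Product over a subtype of a finset equals the product over the finset. -/
lemma prod_subtype_eq {α : Type*} [DecidableEq α] (E : Finset α) (F : α → ℝ) :
    (∏ e : {e // e ∈ E}, F e.1) = ∏ a ∈ E, F a := by
  rw [Finset.univ_eq_attach, Finset.prod_attach]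

/-- The key per-node factorization. -/
lemma nodeFactor {N C R : ℕ} (E : Finset (Fin N × Fin N)) (p : Fin C → ℝ)
    (q : Fin R → Fin C → Fin C → ℝ) (y : Fin N × Fin N → Fin R)
    (hE : ∀ i : Fin N, (i, i) ∉ E) (hpsum : ∑ ℓ, p ℓ = 1) (i : Fin N) :
    (∑ x : Fin N → Fin C, (∏ j, p (x j)) *
        ∏ e : {e // e ∈ E}, (if e.1.2 = i then q (y e.1) (x e.1.1) (x i) else 1))
    = ∑ m, p m * ∏ e : {e // e ∈ E},
        (if e.1.2 = i then ∑ c, p c * q (y e.1) c m else 1) := by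
  classical
  set G : Fin C → Fin N → Fin C → ℝ := fun m j c =>
    if j = i then (if c = m then p c else 0)
    else p c * ∏ e : {e // e ∈ E}, (if e.1.2 = i ∧ e.1.1 = j then q (y e.1) c m else 1)
    with hG
  -- step f1
  have hf1 : ∀ x : Fin N → Fin C,
      (∏ j, p (x j)) * (∏ e : {e // e ∈ E},
        (if e.1.2 = i then q (y e.1) (x e.1.1) (x i) else 1))
      = ∑ m, ∏ j, G m j (x j) := by
    intro x
    rw [Finset.sum_eq_single (x i)]
    · have hGj : ∀ j, G (x i) j (x j)
          = p (x j) * ∏ e : {e // e ∈ E},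
              (if e.1.2 = i ∧ e.1.1 = j then q (y e.1) (x j) (x i) else 1) := by
        intro j
        by_cases hj : j = i
        · subst hj
          have hprod : (∏ e : {e // e ∈ E},
              (if e.1.2 = j ∧ e.1.1 = j then q (y e.1) (x j) (x j) else 1)) = 1 := by
            apply Finset.prod_eq_one
            intro e _
            rw [if_neg]
            rintro ⟨h1, h2⟩
            apply hE j
            have he : e.1 = (j, j) := Prod.ext h2 h1
            rw [← he]; exact e.2
          simp only [hG]
          simp only [if_true, hprod, mul_one]
        · simp [hG, hj]
      rw [Finset.prod_congr rfl (fun j _ => hGj j), Finset.prod_mul_distrib]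
      congr 1
      rw [Finset.prod_comm]
      refine Finset.prod_congr rfl fun e _ => ?_
      by_cases h2 : e.1.2 = i
      · simp only [h2, true_and]
        rw [Finset.prod_ite_eq]
        simp
      · simp [h2]
    · intro m _ hne
      apply Finset.prod_eq_zero (Finset.mem_univ i)
      have hxm : ¬ (x i = m) := fun h => hne h.symm
      simp [hG, hxm]
    · simp
  simp only [hf1]
  rw [Finset.sum_comm]
  have hf2 : ∀ m, (∑ x : Fin N → Fin C, ∏ j, G m j (x j)) = ∏ j, ∑ c, G m j c :=
    fun m => sum_fun_prod (G m)
  simp only [hf2]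
  refine Finset.sum_congr rfl fun m _ => ?_
  -- simplify edge product in G
  have hedge : ∀ (j : Fin N) (c : Fin C),
      (∏ e : {e // e ∈ E}, (if e.1.2 = i ∧ e.1.1 = j then q (y e.1) c m else 1))
      = (if (j, i) ∈ E then q (y (j, i)) c m else 1) := by
    intro j c
    rw [prod_subtype_eq E (fun a => if a.2 = i ∧ a.1 = j then q (y a) c m else 1)]
    rw [show (∏ a ∈ E, (if a.2 = i ∧ a.1 = j then q (y a) c m else 1))
        = ∏ a ∈ E, (if a = (j, i) then q (y a) c m else 1) from
      Finset.prod_congr rfl (fun a _ => by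
        congr 1
        simp [Prod.ext_iff, and_comm])]
    exact Finset.prod_ite_eq' E (j, i) (fun a => q (y a) c m)
  have hcol : ∀ j, (∑ c, G m j c)
      = (if j = i then p m else 1) *
        (if (j, i) ∈ E then ∑ c, p c * q (y (j, i)) c m else 1) := by
    intro j
    by_cases hj : j = i
    · subst hj
      simp only [hG, if_pos rfl]
      rw [Finset.sum_ite_eq' Finset.univ m p]
      simp [hE j]
    · simp only [hG, if_neg hj]
      simp only [hedge j]
      by_cases hji : (j, i) ∈ E
      · simp [hji]
      · simp [hji, hpsum]
  simp only [hcol]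
  rw [Finset.prod_mul_distrib]
  congr 1
  · rw [Finset.prod_ite_eq' Finset.univ i (fun _ => p m)]
    simp
  · rw [prod_subtype_eq E (fun a => if a.2 = i then ∑ c, p c * q (y a) c m else 1)]
    rw [show (∏ j : Fin N, (if (j, i) ∈ E then ∑ c, p c * q (y (j, i)) c m else 1))
        = ∏ j : Fin N, ∏ a ∈ E, (if a = (j, i) then ∑ c, p c * q (y a) c m else 1) from
      Finset.prod_congr rfl (fun j _ =>
        (Finset.prod_ite_eq' E (j, i) (fun a => ∑ c, p c * q (y a) c m)).symm)]
    rw [Finset.prod_comm]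
    refine Finset.prod_congr rfl fun a _ => ?_
    by_cases ha : a.2 = i
    · rw [if_pos ha]
      rw [show (∏ j : Fin N, (if a = (j, i) then ∑ c, p c * q (y a) c m else 1))
          = ∏ j : Fin N, (if a.1 = j then ∑ c, p c * q (y a) c m else 1) from
        Finset.prod_congr rfl (fun j _ => by
          congr 1
          simp [Prod.ext_iff, ha])]
      rw [Finset.prod_ite_eq]
      simp
    · rw [if_neg ha, Finset.prod_eq_one]
      intro j _
      rw [if_neg]
      intro h
      exact ha (by rw [h])

theorem stmt_11 (N C R : ℕ) (hN : 1 ≤ N) (hC : 1 ≤ C) (hR : 1 ≤ R)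
    (E : Finset (Fin N × Fin N)) (hE : ∀ i : Fin N, (i, i) ∉ E)
    (p : Fin C → ℝ) (hp : ∀ ℓ, 0 ≤ p ℓ) (hpsum : ∑ ℓ, p ℓ = 1)
    (q : Fin R → Fin C → Fin C → ℝ) (hq : ∀ h ℓ m, 0 ≤ q h ℓ m)
    (hqsum : ∀ ℓ m, ∑ h, q h ℓ m = 1)
    (y : Fin N × Fin N → Fin R) :
    prRelEvent E p q {ω | ∀ e : {e // e ∈ E}, ω.2.2 e = y e.1}
      = ∏ i : Fin N,
          prEvent E p q {ω | ∀ e : {e // e ∈ E}, e.1.2 = i → ω.2 e = y e.1} := by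
  classical
  -- Step 1: compute the LHS as a sum over states only
  have hL : prRelEvent E p q {ω | ∀ e : {e // e ∈ E}, ω.2.2 e = y e.1}
      = ∑ x : Fin N → Fin C, (∏ i, p (x i)) *
          ∏ e : {e // e ∈ E}, ∑ c, p c * q (y e.1) c (x e.1.2) := by
    unfold prRelEvent
    rw [Fintype.sum_prod_type]
    refine Finset.sum_congr rfl fun x _ => ?_
    rw [Fintype.sum_prod_type]
    have step1 : ∀ xv : {e // e ∈ E} → Fin C,
        (∑ y' : {e // e ∈ E} → Fin R,
          ({ω : (Fin N → Fin C) × ({e // e ∈ E} → Fin C) × ({e // e ∈ E} → Fin R) |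
            ∀ e : {e // e ∈ E}, ω.2.2 e = y e.1}).indicator (relP E p q) (x, xv, y'))
        = relP E p q (x, xv, fun e => y e.1) := by
      intro xv
      rw [Finset.sum_eq_single (fun e : {e // e ∈ E} => y e.1)]
      · rw [Set.indicator_of_mem]
        exact fun e => rfl
      · intro y' _ hne
        rw [Set.indicator_of_notMem]
        intro hmem
        exact hne (funext fun e => hmem e)
      · simp
    simp only [step1]
    unfold relP
    dsimp only
    rw [← Finset.mul_sum]
    congr 1
    exact sum_fun_prod (fun (e : {e // e ∈ E}) (c : Fin C) => p c * q (y e.1) c (x e.1.2))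
  -- Step 2: factorize the LHS over nodes
  have hL2 : (∑ x : Fin N → Fin C, (∏ i, p (x i)) *
        ∏ e : {e // e ∈ E}, ∑ c, p c * q (y e.1) c (x e.1.2))
      = ∏ i : Fin N, ∑ m, p m * ∏ e : {e // e ∈ E},
          (if e.1.2 = i then ∑ c, p c * q (y e.1) c m else 1) := by
    rw [← sum_fun_prod (fun (i : Fin N) (m : Fin C) =>
      p m * ∏ e : {e // e ∈ E}, if e.1.2 = i then (∑ c, p c * q (y e.1) c m) else 1)]
    refine Finset.sum_congr rfl fun x _ => ?_
    rw [Finset.prod_mul_distrib]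
    congr 1
    rw [Finset.prod_comm]
    refine Finset.prod_congr rfl fun e _ => ?_
    rw [Finset.prod_ite_eq]
    simp
  -- Step 3: compute each factor of the RHS
  have hR : ∀ i : Fin N,
      prEvent E p q {ω | ∀ e : {e // e ∈ E}, e.1.2 = i → ω.2 e = y e.1}
      = ∑ x : Fin N → Fin C, (∏ j, p (x j)) *
          ∏ e : {e // e ∈ E}, (if e.1.2 = i then q (y e.1) (x e.1.1) (x i) else 1) := by
    intro i
    unfold prEvent
    rw [Fintype.sum_prod_type]
    refine Finset.sum_congr rfl fun x _ => ?_
    have hb : ∀ y' : {e // e ∈ E} → Fin R,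
        ({ω : (Fin N → Fin C) × ({e // e ∈ E} → Fin R) |
          ∀ e : {e // e ∈ E}, e.1.2 = i → ω.2 e = y e.1}).indicator
          (jointP E p q) (x, y')
        = (∏ j, p (x j)) * ∏ e : {e // e ∈ E},
            (if e.1.2 = i then (if y' e = y e.1 then q (y' e) (x e.1.1) (x e.1.2) else 0)
             else q (y' e) (x e.1.1) (x e.1.2)) := by
      intro y'
      by_cases hc : ∀ e : {e // e ∈ E}, e.1.2 = i → y' e = y e.1
      · have hmem : ((x, y') : (Fin N → Fin C) × ({e // e ∈ E} → Fin R)) ∈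
            {ω : (Fin N → Fin C) × ({e // e ∈ E} → Fin R) |
              ∀ e : {e // e ∈ E}, e.1.2 = i → ω.2 e = y e.1} := hc
        rw [Set.indicator_of_mem hmem]
        unfold jointP
        dsimp only
        congr 1
        refine Finset.prod_congr rfl fun e _ => ?_
        by_cases h2 : e.1.2 = i
        · simp [h2, hc e h2]
        · simp [h2]
      · have hmem : ((x, y') : (Fin N → Fin C) × ({e // e ∈ E} → Fin R)) ∉
            {ω : (Fin N → Fin C) × ({e // e ∈ E} → Fin R) |
              ∀ e : {e // e ∈ E}, e.1.2 = i → ω.2 e = y e.1} := hc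
        rw [Set.indicator_of_notMem hmem]
        push_neg at hc
        obtain ⟨e, he1, he2⟩ := hc
        symm
        apply mul_eq_zero_of_right
        apply Finset.prod_eq_zero (Finset.mem_univ e)
        simp [he1, he2]
    simp only [hb]
    rw [← Finset.mul_sum]
    congr 1
    rw [sum_fun_prod (fun (e : {e // e ∈ E}) (r : Fin R) =>
      if e.1.2 = i then (if r = y e.1 then q r (x e.1.1) (x e.1.2) else 0)
      else q r (x e.1.1) (x e.1.2))]
    refine Finset.prod_congr rfl fun e _ => ?_
    by_cases h2 : e.1.2 = i
    · simp only [h2, if_true]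
      rw [Finset.sum_ite_eq' Finset.univ (y e.1)
        (fun r => q r (x e.1.1) (x i))]
      simp
    · simp [h2, hqsum]
  rw [hL, hL2]
  refine Finset.prod_congr rfl fun i _ => ?_
  rw [hR i, nodeFactor E p q y hE hpsum i]
end
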